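/- Let 𝐀 and 𝐁 be σ-structures. If 𝐀 and 𝐁 have a common equitable partition, then they have the same iterated degree sequence: for every j ≥ 0, whenever a ∈ P_i^𝐀 and b ∈ P_i^𝐁 lie in corresponding partition classes, δ_j^𝐀(a) = δ_j^𝐁(b), and similarly for constraints. -/

import Mathlib

open Finset BigOperators

variable {σ : Type} [Fintype σ] [DecidableEq σ]

/-- Edge labels of the factor graph of a `σ`-structure: pairs `(S,R)` with
`S ⊆ [ar R]`. -/
abbrev FLab (ar : σ → ℕ) : Type := Σ R : σ, Finset (Fin (ar R))

/-- The type of iterated degrees (colours) after `n` refinement rounds on the labelled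
factor graph. The initial colour (a `Bool`) distinguishes elements from constraints. -/
def FColor (ar : σ → ℕ) : ℕ → Type
  | 0 => Bool
  | n + 1 => FColor ar n × Multiset (FLab ar × FColor ar n)

instance fColorDecEq (ar : σ → ℕ) : ∀ n, DecidableEq (FColor ar n)
  | 0 => inferInstanceAs (DecidableEq Bool)
  | n + 1 =>
      letI := fColorDecEq ar n
      inferInstanceAs (DecidableEq (FColor ar n × Multiset (FLab ar × FColor ar n)))

/-- The constraints of a structure: pairs of a symbol `R` and a tuple in `R`'s relation. -/
abbrev Cstr (ar : σ → ℕ) {D : Type} (rel : ∀ R : σ, Finset (Fin (ar R) → D)) : Type :=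
  Σ R : σ, {x : Fin (ar R) → D // x ∈ rel R}

/-- The label of the factor-graph edge between an element `a` and a constraint `c`. -/
def fLabOf (ar : σ → ℕ) {D : Type} [DecidableEq D] {rel : ∀ R : σ, Finset (Fin (ar R) → D)}
    (a : D) (c : Cstr ar rel) : FLab ar :=
  ⟨c.1, Finset.univ.filter (fun i => c.2.1 i = a)⟩

/-- The iterated degree `δ_n` of a vertex of the labelled factor graph of the structure
`rel` (a vertex is either an element, `Sum.inl`, or a constraint, `Sum.inr`):
`δ_0` distinguishes elements from constraints and
`δ_{n+1}(v) = (δ_n(v), {{(ℓ_{v,w}, δ_n(w)) : w a factor-graph neighbour of v}})`. -/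
def fdeg (ar : σ → ℕ) {D : Type} [Fintype D] [DecidableEq D]
    (rel : ∀ R : σ, Finset (Fin (ar R) → D)) :
    (n : ℕ) → (D ⊕ Cstr ar rel) → FColor ar n
  | 0, Sum.inl _ => false
  | 0, Sum.inr _ => true
  | n + 1, Sum.inl a =>
      (fdeg ar rel n (Sum.inl a),
        ((Finset.univ.filter (fun c : Cstr ar rel => ∃ i, c.2.1 i = a)).val.map
          (fun c => (fLabOf ar a c, fdeg ar rel n (Sum.inr c)))))
  | n + 1, Sum.inr c =>
      (fdeg ar rel n (Sum.inr c),
        ((Finset.univ.filter (fun a : D => ∃ i, c.2.1 i = a)).val.map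
          (fun a => (fLabOf ar a c, fdeg ar rel n (Sum.inl a)))))

/-- Two similar structures have the same iterated degree sequence if, for every `n`,
the multisets of iterated degrees of their factor-graph vertices coincide. -/
def SameIDS (ar : σ → ℕ) {D₁ D₂ : Type} [Fintype D₁] [DecidableEq D₁]
    [Fintype D₂] [DecidableEq D₂]
    (rel₁ : ∀ R : σ, Finset (Fin (ar R) → D₁))
    (rel₂ : ∀ R : σ, Finset (Fin (ar R) → D₂)) : Prop :=
  ∀ n : ℕ,
    Multiset.map (fdeg ar rel₁ n) Finset.univ.val =
      Multiset.map (fdeg ar rel₂ n) Finset.univ.val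

/-- A homomorphism between similar relational structures. -/
def IsHom (ar : σ → ℕ) {DX DA : Type}
    (relX : ∀ R : σ, Finset (Fin (ar R) → DX))
    (relA : ∀ R : σ, Finset (Fin (ar R) → DA))
    (h : DX → DA) : Prop :=
  ∀ (R : σ) (x : Fin (ar R) → DX), x ∈ relX R → (fun i => h (x i)) ∈ relA R

/-- A pair of colourings (of elements by `I` and of constraints by `J`) of a structure
is an equitable partition with parameters `cpar`, `dpar` if, for every element class,
constraint class and label, the number of constraints of the given class incident to a
fixed element with the given label equals `cpar`, and dually for `dpar`. -/
def IsEquitableRel (ar : σ → ℕ) {D I J : Type} [Fintype D] [DecidableEq D]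
    [DecidableEq I] [DecidableEq J]
    (rel : ∀ R : σ, Finset (Fin (ar R) → D))
    (cE : D → I) (cC : Cstr ar rel → J)
    (cpar : I → J → FLab ar → ℕ) (dpar : J → I → FLab ar → ℕ) : Prop :=
  (∀ (a : D) (j : J) (ℓ : FLab ar),
      (Finset.univ.filter (fun c : Cstr ar rel =>
        cC c = j ∧ (∃ i, c.2.1 i = a) ∧ fLabOf ar a c = ℓ)).card = cpar (cE a) j ℓ) ∧
  (∀ (c : Cstr ar rel) (i : I) (ℓ : FLab ar),
      (Finset.univ.filter (fun a : D =>
        cE a = i ∧ (∃ i', c.2.1 i' = a) ∧ fLabOf ar a c = ℓ)).card = dpar (cC c) i ℓ)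

/-! Induction on `n`. If `δ_n` is constant on corresponding classes of `𝐀` and `𝐁`, then the
multiset of pairs (label, `δ_n`) over the neighbours of a vertex is determined by the number of
neighbours in each (class, label) fibre, and equitability makes these numbers depend only on
the class of the vertex; so `δ_{n+1}` is again constant on corresponding classes. Equal class
sizes then turn this into equality of the multisets of iterated degrees. -/

section ClassCounting

variable {α β κ Γ : Type*} [DecidableEq κ] {s : Finset α} {t : Finset β} {p : α → κ} {q : β → κ}

theorem Finset.map_val_eq_of_card_filter_eq
    (h : ∀ k, #(s.filter (p · = k)) = #(t.filter (q · = k))) :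
    s.val.map p = t.val.map q := by
  ext k
  simp only [Multiset.count_map, eq_comm (a := k)]
  exact h k

theorem Finset.exists_mem_eq_of_card_filter_eq
    (h : ∀ k, #(s.filter (p · = k)) = #(t.filter (q · = k))) {x : α} (hx : x ∈ s) :
    ∃ y ∈ t, q y = p x := by
  have hpos : 0 < #(t.filter (q · = p x)) :=
    h (p x) ▸ card_pos.mpr ⟨x, mem_filter.mpr ⟨hx, rfl⟩⟩
  obtain ⟨y, hy⟩ := card_pos.mp hpos
  exact ⟨y, (mem_filter.mp hy).1, (mem_filter.mp hy).2⟩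

theorem Finset.map_val_eq_of_card_filter_eq_of_forall_eq
    (h : ∀ k, #(s.filter (p · = k)) = #(t.filter (q · = k)))
    {f : α → Γ} {g : β → Γ} (hfg : ∀ x ∈ s, ∀ y ∈ t, p x = q y → f x = g y) :
    s.val.map f = t.val.map g := by
  classical
  ext γ
  -- a colour class is a union of partition classes, namely those meeting it in `t`
  let Q : κ → Prop := fun k => ∃ y ∈ t, q y = k ∧ γ = g y
  have hs : s.val.filter (γ = f ·) = s.val.filter (Q ∘ p) := by
    refine Multiset.filter_congr fun x hx => ⟨fun hγ => ?_, ?_⟩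
    · obtain ⟨y, hy, hyx⟩ := exists_mem_eq_of_card_filter_eq h hx
      exact ⟨y, hy, hyx, hγ.trans (hfg x hx y hy hyx.symm)⟩
    · rintro ⟨y, hy, hyx, hγ⟩
      exact hγ.trans (hfg x hx y hy hyx.symm).symm
  have ht : t.val.filter (γ = g ·) = t.val.filter (Q ∘ q) := by
    refine Multiset.filter_congr fun y hy => ⟨fun hγ => ⟨y, hy, rfl, hγ⟩, ?_⟩
    rintro ⟨y', hy', hyy', hγ⟩
    obtain ⟨x, hx, hxy⟩ := exists_mem_eq_of_card_filter_eq (fun k => (h k).symm) hy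
    rw [hγ, ← hfg x hx y' hy' (hxy.trans hyy'.symm), hfg x hx y hy hxy]
  rw [Multiset.count_map, Multiset.count_map, hs, ht, ← Multiset.card_map p,
    ← Multiset.card_map q, ← Multiset.filter_map, ← Multiset.filter_map,
    Finset.map_val_eq_of_card_filter_eq h]

theorem Finset.card_filter_sum_map_eq {μ α' β' : Type*} [DecidableEq μ] [Fintype α] [Fintype β]
    [Fintype α'] [Fintype β'] {f : α → κ} {g : β → μ} {f' : α' → κ} {g' : β' → μ}
    (hf : ∀ i, #(univ.filter (f · = i)) = #(univ.filter (f' · = i)))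
    (hg : ∀ j, #(univ.filter (g · = j)) = #(univ.filter (g' · = j))) (k : κ ⊕ μ) :
    #(univ.filter (Sum.map f g · = k)) = #(univ.filter (Sum.map f' g' · = k)) := by
  simp only [card_filter, Fintype.sum_sum_type] at hf hg ⊢
  cases k with
  | inl i => simpa using hf i
  | inr j => simpa using hg j

end ClassCounting

section EquitablePartition

variable {ar : σ → ℕ} {D I J : Type} [Fintype D] [DecidableEq D] [DecidableEq I] [DecidableEq J]
  {rel : ∀ R : σ, Finset (Fin (ar R) → D)} {cE : D → I} {cC : Cstr ar rel → J}
  {cpar : I → J → FLab ar → ℕ} {dpar : J → I → FLab ar → ℕ}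

theorem IsEquitableRel.card_filter_incident_cstr (h : IsEquitableRel ar rel cE cC cpar dpar)
    (a : D) (k : J × FLab ar) :
    #((univ.filter fun c : Cstr ar rel => ∃ i, c.2.1 i = a).filter
      fun c => (cC c, fLabOf ar a c) = k) = cpar (cE a) k.1 k.2 := by
  rw [filter_filter, ← h.1 a k.1 k.2]
  congr 1
  refine filter_congr fun c _ => ?_
  rw [Prod.ext_iff]
  tauto

theorem IsEquitableRel.card_filter_incident_elem (h : IsEquitableRel ar rel cE cC cpar dpar)
    (c : Cstr ar rel) (k : I × FLab ar) :
    #((univ.filter fun a : D => ∃ i, c.2.1 i = a).filter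
      fun a => (cE a, fLabOf ar a c) = k) = dpar (cC c) k.1 k.2 := by
  rw [filter_filter, ← h.2 c k.1 k.2]
  congr 1
  refine filter_congr fun a _ => ?_
  rw [Prod.ext_iff]
  tauto

end EquitablePartition

section TwoStructures

variable {ar : σ → ℕ} {DA DB I J : Type} [Fintype DA] [DecidableEq DA] [Fintype DB]
  [DecidableEq DB] [DecidableEq I] [DecidableEq J]
  {relA : ∀ R : σ, Finset (Fin (ar R) → DA)} {relB : ∀ R : σ, Finset (Fin (ar R) → DB)}
  {cEA : DA → I} {cCA : Cstr ar relA → J} {cEB : DB → I} {cCB : Cstr ar relB → J}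

theorem fdeg_eq_of_sum_map_eq {cpar : I → J → FLab ar → ℕ} {dpar : J → I → FLab ar → ℕ}
    (hA : IsEquitableRel ar relA cEA cCA cpar dpar)
    (hB : IsEquitableRel ar relB cEB cCB cpar dpar) (n : ℕ) :
    ∀ v w, Sum.map cEA cCA v = Sum.map cEB cCB w → fdeg ar relA n v = fdeg ar relB n w := by
  induction n with
  | zero => rintro (a | c) (b | d) h <;> first | rfl | simp at h
  | succ n ih =>
    rintro (a | c) (b | d) h
    · have hab : cEA a = cEB b := Sum.inl_injective h
      refine Prod.ext (ih _ _ h) (map_val_eq_of_card_filter_eq_of_forall_eq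
        (p := fun c => (cCA c, fLabOf ar a c)) (q := fun c => (cCB c, fLabOf ar b c))
        (fun k => by rw [hA.card_filter_incident_cstr, hB.card_filter_incident_cstr, hab])
        fun x _ y _ hxy => Prod.ext (Prod.ext_iff.mp hxy).2 (ih _ _ ?_))
      exact congrArg Sum.inr (Prod.ext_iff.mp hxy).1
    · simp at h
    · simp at h
    · have hcd : cCA c = cCB d := Sum.inr_injective h
      refine Prod.ext (ih _ _ h) (map_val_eq_of_card_filter_eq_of_forall_eq
        (p := fun a => (cEA a, fLabOf ar a c)) (q := fun a => (cEB a, fLabOf ar a d))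
        (fun k => by rw [hA.card_filter_incident_elem, hB.card_filter_incident_elem, hcd])
        fun x _ y _ hxy => Prod.ext (Prod.ext_iff.mp hxy).2 (ih _ _ ?_))
      exact congrArg Sum.inl (Prod.ext_iff.mp hxy).1

end TwoStructures

/-- If two similar structures have a common equitable partition (equitable partitions
with the same parameters and corresponding classes of equal sizes), then corresponding
classes have equal iterated degrees at every level, and in particular the two
structures have the same iterated degree sequence. -/
theorem stmt18 (ar : σ → ℕ) {DA DB I J : Type}
    [Fintype DA] [DecidableEq DA] [Fintype DB] [DecidableEq DB]
    [DecidableEq I] [DecidableEq J]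
    (relA : ∀ R : σ, Finset (Fin (ar R) → DA))
    (relB : ∀ R : σ, Finset (Fin (ar R) → DB))
    (cEA : DA → I) (cCA : Cstr ar relA → J)
    (cEB : DB → I) (cCB : Cstr ar relB → J)
    (cpar : I → J → FLab ar → ℕ) (dpar : J → I → FLab ar → ℕ)
    (hA : IsEquitableRel ar relA cEA cCA cpar dpar)
    (hB : IsEquitableRel ar relB cEB cCB cpar dpar)
    (hsizeE : ∀ i : I,
      (Finset.univ.filter (fun a : DA => cEA a = i)).card =
        (Finset.univ.filter (fun b : DB => cEB b = i)).card)
    (hsizeC : ∀ j : J,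
      (Finset.univ.filter (fun c : Cstr ar relA => cCA c = j)).card =
        (Finset.univ.filter (fun c : Cstr ar relB => cCB c = j)).card) :
    (∀ (n : ℕ) (a : DA) (b : DB), cEA a = cEB b →
      fdeg ar relA n (Sum.inl a) = fdeg ar relB n (Sum.inl b)) ∧
    (∀ (n : ℕ) (cA : Cstr ar relA) (cB : Cstr ar relB), cCA cA = cCB cB →
      fdeg ar relA n (Sum.inr cA) = fdeg ar relB n (Sum.inr cB)) ∧
    SameIDS ar relA relB := by
  have hdeg := fdeg_eq_of_sum_map_eq hA hB
  refine ⟨fun n a b h => hdeg n _ _ (congrArg Sum.inl h),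
    fun n c d h => hdeg n _ _ (congrArg Sum.inr h), fun n => ?_⟩
  exact map_val_eq_of_card_filter_eq_of_forall_eq (card_filter_sum_map_eq hsizeE hsizeC)
    fun v _ w _ => hdeg n v w
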